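/- Let k ≥ 1 and let C be a Type II Z_{2k}-code of length 2n with generator matrix (I_n | A), where A is an n×n matrix over Z_{2k} with rows r_1,...,r_n. Let x, y ∈ (Z_{2k})^n satisfy wt_E(x) ≡ wt_E(y) ≡ 0 (mod 4k) and ⟨x,y⟩ = 0. Define A(x,y) as the n×n matrix whose i-th row is r_i + ⟨r_i,y⟩x − ⟨r_i,x⟩y. Then the Z_{2k}-code C(A,x,y) of length 2n with generator matrix (I_n | A(x,y)) is a Type II Z_{2k}-code. -/

import Mathlib

open Finset

/-- Inner product of two vectors over `ZMod m`. -/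
def dotP {m : ℕ} {ι : Type} [Fintype ι] (x y : ι → ZMod m) : ZMod m :=
  ∑ i, x i * y i

/-- A `ZMod m`-code (submodule) is self-dual if it equals its dual code. -/
def IsSelfDual {m : ℕ} {ι : Type} [Fintype ι]
    (C : Submodule (ZMod m) (ι → ZMod m)) : Prop :=
  ∀ x, x ∈ C ↔ ∀ y ∈ C, dotP x y = 0

/-- The code of length `2n` with generator matrix `(I | M)`: the span of the
vectors `(e_i, M i)`. -/
def genCode (m : ℕ) {ι : Type} [Fintype ι] [DecidableEq ι] (M : ι → ι → ZMod m) :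
    Submodule (ZMod m) (ι ⊕ ι → ZMod m) :=
  Submodule.span (ZMod m)
    {v | ∃ i : ι, v = Sum.elim (fun j => if j = i then 1 else 0) (M i)}

/-- The map `ρ : ZMod m → ℤ` sending the representative `i ∈ {0,…,m−1}` to `i`
if `i ≤ m/2` and to `i − m` otherwise (for `m = 2k` this is the map of the paper). -/
def rho (m : ℕ) (a : ZMod m) : ℤ :=
  if a.val ≤ m / 2 then (a.val : ℤ) else (a.val : ℤ) - (m : ℤ)

/-- Euclidean weight of a vector over `ZMod m`. -/
def wtE {m : ℕ} {ι : Type} [Fintype ι] (v : ι → ZMod m) : ℤ :=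
  ∑ i, (rho m (v i)) ^ 2

/-- A Type II `ZMod (2k)`-code: self-dual and all Euclidean weights divisible by `4k`. -/
def IsTypeII (k : ℕ) {ι : Type} [Fintype ι]
    (C : Submodule (ZMod (2 * k)) (ι → ZMod (2 * k))) : Prop :=
  IsSelfDual C ∧ ∀ c ∈ C, (4 * (k : ℤ)) ∣ wtE c

/-- Equivalence of `ZMod m`-codes: a permutation of coordinates together with
sign changes. -/
def CodeEquiv {m n : ℕ} (C C' : Submodule (ZMod m) (Fin n → ZMod m)) : Prop :=
  ∃ (σ : Equiv.Perm (Fin n)) (ε : Fin n → ZMod m),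
    (∀ i, ε i = 1 ∨ ε i = -1) ∧
    (C' : Set (Fin n → ZMod m)) =
      (fun c : Fin n → ZMod m => fun i => ε i * c (σ i)) '' (C : Set (Fin n → ZMod m))

/-- The binary part of a `ZMod m`-code. -/
def binaryPart {m n : ℕ} (C : Submodule (ZMod m) (Fin n → ZMod m)) :
    Set (Fin n → ZMod 2) :=
  {b | ∃ c ∈ C, ∀ i, b i = ((rho m (c i) : ℤ) : ZMod 2)}

/-- Hamming weight of a binary vector. -/
def wtH {n : ℕ} (b : Fin n → ZMod 2) : ℕ :=
  (Finset.univ.filter fun i => b i ≠ 0).card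

/-- The `n × n` negacirculant matrix with first row `r`. -/
def negacirc {m n : ℕ} (r : Fin n → ZMod m) : Fin n → Fin n → ZMod m :=
  fun i j =>
    if h : (i : ℕ) ≤ (j : ℕ) then r ⟨(j : ℕ) - (i : ℕ), by have hj := j.isLt; omega⟩
    else -r ⟨n + (j : ℕ) - (i : ℕ), by have hi := i.isLt; have hj := j.isLt; omega⟩

/-- The block matrix `[[A, B], [−Bᵀ, Aᵀ]]`. -/
def fourBlock {m n : ℕ} (A B : Fin n → Fin n → ZMod m) :
    (Fin n ⊕ Fin n) → (Fin n ⊕ Fin n) → ZMod m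
  | Sum.inl i, Sum.inl j => A i j
  | Sum.inl i, Sum.inr j => B i j
  | Sum.inr i, Sum.inl j => -B j i
  | Sum.inr i, Sum.inr j => A j i

/-- The Construction A lattice `A_m(C) = (1/√m)(ρ(C) + m ℤ^n)` as a subset of `ℝ^n`. -/
noncomputable def constrA (m : ℕ) {n : ℕ} (C : Submodule (ZMod m) (Fin n → ZMod m)) :
    Set (Fin n → ℝ) :=
  {x | ∃ c ∈ C, ∃ z : Fin n → ℤ,
    x = fun i => (1 / Real.sqrt m) * ((rho m (c i) : ℝ) + (m : ℝ) * (z i : ℝ))}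

/-!
The row map `r ↦ r + ⟨r,y⟩x − ⟨r,x⟩y` (an Eichler transformation) preserves the dot product
because `x` and `y` span a totally isotropic plane, so the new matrix still satisfies
`A Aᵀ = −I`, which for a generator matrix `(I | A)` is equivalent to self-duality.
Modulo `4k` the Euclidean weight is a quadratic form with polar form `2⟨·,·⟩`: `ρ` is additive
and multiplicative modulo `2k`, and `s ≡ t (mod 2k)` implies `s² ≡ t² (mod 4k)`. Hence in a
self-orthogonal code it suffices to check the generators, and the new generator
`(e_i, r_i) + ⟨r_i,y⟩(0,x) − ⟨r_i,x⟩(0,y)` combines three vectors of weight `0 (mod 4k)`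
whose cross terms cancel.
-/

open Matrix

theorem dotP_eq_dotProduct {m : ℕ} {ι : Type} [Fintype ι] (x y : ι → ZMod m) :
    dotP x y = x ⬝ᵥ y :=
  rfl

theorem dotProduct_eq_zero_of_mem_span {R ι : Type*} [CommRing R] [Fintype ι] {S : Set (ι → R)}
    (hS : ∀ u ∈ S, ∀ v ∈ S, u ⬝ᵥ v = 0) {u v : ι → R}
    (hu : u ∈ Submodule.span R S) (hv : v ∈ Submodule.span R S) : u ⬝ᵥ v = 0 := by
  induction hu, hv using Submodule.span_induction₂ with
  | mem_mem u v hu hv => exact hS u hu v hv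
  | zero_left | zero_right => simp
  | add_left | add_right => simp_all [add_dotProduct, dotProduct_add]
  | smul_left | smul_right => simp_all [smul_dotProduct, dotProduct_smul]

section GenCode

variable {m : ℕ} {ι : Type} [Fintype ι] [DecidableEq ι]

def genRow (M : ι → ι → ZMod m) (i : ι) : ι ⊕ ι → ZMod m :=
  Sum.elim (fun j => if j = i then 1 else 0) (M i)

theorem genCode_eq_span_range_genRow (M : ι → ι → ZMod m) :
    genCode m M = Submodule.span (ZMod m) (Set.range (genRow M)) := by
  simp only [genCode, genRow, Set.range, eq_comm]

theorem genRow_mem_genCode (M : ι → ι → ZMod m) (i : ι) : genRow M i ∈ genCode m M :=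
  Submodule.subset_span ⟨i, rfl⟩

theorem dotProduct_genRow (M : ι → ι → ZMod m) (v : ι ⊕ ι → ZMod m) (i : ι) :
    v ⬝ᵥ genRow M i = v (Sum.inl i) + (of M *ᵥ (v ∘ Sum.inr)) i := by
  rw [← Sum.elim_comp_inl_inr v, genRow, sumElim_dotProduct_sumElim, mulVec, dotProduct_comm]
  simp [dotProduct, mul_comm]

theorem genRow_dotProduct_genRow (M : ι → ι → ZMod m) (i j : ι) :
    genRow M i ⬝ᵥ genRow M j = (1 + of M * (of M)ᵀ) i j := by
  rw [dotProduct_genRow]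
  simp [genRow, one_apply, mul_apply, mulVec, dotProduct, mul_comm, eq_comm]

theorem sum_smul_genRow (M : ι → ι → ZMod m) (c : ι → ZMod m) :
    ∑ i, c i • genRow M i = Sum.elim c (c ᵥ* of M) := by
  ext (j | j) <;> simp [genRow, vecMul, dotProduct]

theorem isSelfDual_genCode_iff (M : ι → ι → ZMod m) :
    IsSelfDual (genCode m M) ↔ of M * (of M)ᵀ = -1 := by
  constructor
  · intro h
    ext i j
    have := (h _).1 (genRow_mem_genCode M i) _ (genRow_mem_genCode M j)
    rw [dotP_eq_dotProduct, genRow_dotProduct_genRow] at this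
    simpa [add_eq_zero_iff_eq_neg'] using this
  · intro h v
    have hgen : ∀ u ∈ Set.range (genRow M), ∀ w ∈ Set.range (genRow M), u ⬝ᵥ w = 0 := by
      rintro _ ⟨i, rfl⟩ _ ⟨j, rfl⟩
      simp [genRow_dotProduct_genRow, h]
    simp only [dotP_eq_dotProduct, genCode_eq_span_range_genRow]
    refine ⟨fun hv w hw => dotProduct_eq_zero_of_mem_span hgen hv hw, fun hv => ?_⟩
    have hinl : v ∘ Sum.inl = -(of M *ᵥ (v ∘ Sum.inr)) := by
      ext i
      have := hv _ (Submodule.subset_span ⟨i, rfl⟩)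
      rw [dotProduct_genRow] at this
      simpa [eq_neg_iff_add_eq_zero] using this
    have hMtM : (of M)ᵀ * of M = -1 := by
      rw [← neg_eq_iff_eq_neg, ← Matrix.neg_mul]
      exact mul_eq_one_comm.mp (by rw [Matrix.mul_neg, h, neg_neg])
    have hinr : v ∘ Sum.inr = (v ∘ Sum.inl) ᵥ* of M := by
      rw [hinl, neg_vecMul, ← vecMul_transpose, vecMul_vecMul, hMtM, vecMul_neg, vecMul_one,
        neg_neg]
    rw [← Sum.elim_comp_inl_inr v, hinr, ← sum_smul_genRow]
    exact Submodule.sum_mem _ fun i _ => Submodule.smul_mem _ _ (Submodule.subset_span ⟨i, rfl⟩)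

end GenCode

section Weight

variable {ι : Type} [Fintype ι]

theorem intCast_rho {m : ℕ} [NeZero m] (a : ZMod m) : ((rho m a : ℤ) : ZMod m) = a := by
  unfold rho; split <;> simp

theorem rho_zero {m : ℕ} [NeZero m] : rho m 0 = 0 := by
  simp [rho]

theorem wtE_zero {m : ℕ} [NeZero m] : wtE (0 : ι → ZMod m) = 0 := by
  simp [wtE, rho_zero]

theorem wtE_sumElim {m : ℕ} (u v : ι → ZMod m) : wtE (Sum.elim u v) = wtE u + wtE v := by
  simp [wtE, Fintype.sum_sum_type]

theorem intCast_wtE {m : ℕ} [NeZero m] (v : ι → ZMod m) : ((wtE v : ℤ) : ZMod m) = v ⬝ᵥ v := by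
  simp [wtE, dotProduct, intCast_rho, sq]

theorem rho_add_modEq {m : ℕ} [NeZero m] (a b : ZMod m) :
    rho m (a + b) ≡ rho m a + rho m b [ZMOD m] := by
  rw [← ZMod.intCast_eq_intCast_iff]; push_cast; simp [intCast_rho]

theorem rho_mul_modEq {m : ℕ} [NeZero m] (a b : ZMod m) :
    rho m (a * b) ≡ rho m a * rho m b [ZMOD m] := by
  rw [← ZMod.intCast_eq_intCast_iff]; push_cast; simp [intCast_rho]

theorem sum_rho_mul_modEq_zero {m : ℕ} [NeZero m] {u v : ι → ZMod m} (h : u ⬝ᵥ v = 0) :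
    ∑ i, rho m (u i) * rho m (v i) ≡ 0 [ZMOD m] := by
  rw [← ZMod.intCast_eq_intCast_iff]; push_cast; simpa [intCast_rho, dotProduct] using h

theorem Int.sq_modEq_sq_of_modEq_two_mul {k s t : ℤ} (h : s ≡ t [ZMOD 2 * k]) :
    s ^ 2 ≡ t ^ 2 [ZMOD 4 * k] := by
  obtain ⟨q, hq⟩ := Int.modEq_iff_dvd.1 h
  exact Int.modEq_iff_dvd.2 ⟨q * (s + k * q), by linear_combination (t + s + 2 * k * q) * hq⟩

variable {k : ℕ} [NeZero (2 * k)]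

theorem wtE_add_modEq (u v : ι → ZMod (2 * k)) :
    wtE (u + v) ≡ wtE u + wtE v + 2 * ∑ i, rho (2 * k) (u i) * rho (2 * k) (v i)
      [ZMOD 4 * k] := by
  have h : ∀ i, rho (2 * k) (u i + v i) ^ 2 ≡ (rho (2 * k) (u i) + rho (2 * k) (v i)) ^ 2
      [ZMOD 4 * k] := fun i =>
    Int.sq_modEq_sq_of_modEq_two_mul (by exact_mod_cast rho_add_modEq (u i) (v i))
  calc wtE (u + v) ≡ ∑ i, (rho (2 * k) (u i) + rho (2 * k) (v i)) ^ 2 [ZMOD 4 * k] :=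
        Int.ModEq.sum fun i _ => h i
    _ = _ := by simp only [wtE, add_sq, Finset.sum_add_distrib, Finset.mul_sum, mul_assoc]; ring

theorem wtE_smul_modEq (c : ZMod (2 * k)) (u : ι → ZMod (2 * k)) :
    wtE (c • u) ≡ rho (2 * k) c ^ 2 * wtE u [ZMOD 4 * k] := by
  have h : ∀ i, rho (2 * k) (c * u i) ^ 2 ≡ (rho (2 * k) c * rho (2 * k) (u i)) ^ 2
      [ZMOD 4 * k] := fun i =>
    Int.sq_modEq_sq_of_modEq_two_mul (by exact_mod_cast rho_mul_modEq c (u i))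
  calc wtE (c • u) ≡ ∑ i, (rho (2 * k) c * rho (2 * k) (u i)) ^ 2 [ZMOD 4 * k] :=
        Int.ModEq.sum fun i _ => h i
    _ = _ := by simp only [wtE, mul_pow, Finset.mul_sum]

theorem dotProduct_self_eq_zero_of_dvd_wtE {v : ι → ZMod (2 * k)} (hv : 4 * (k : ℤ) ∣ wtE v) :
    v ⬝ᵥ v = 0 := by
  rw [← intCast_wtE, ZMod.intCast_zmod_eq_zero_iff_dvd]
  exact dvd_trans ⟨2, by push_cast; ring⟩ hv

theorem dvd_wtE_add {u v : ι → ZMod (2 * k)} (hu : 4 * (k : ℤ) ∣ wtE u)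
    (hv : 4 * (k : ℤ) ∣ wtE v) (huv : u ⬝ᵥ v = 0) : 4 * (k : ℤ) ∣ wtE (u + v) := by
  have hcross : 2 * ∑ i, rho (2 * k) (u i) * rho (2 * k) (v i) ≡ 2 * 0 [ZMOD 2 * (2 * k)] :=
    Int.ModEq.mul_left' (by exact_mod_cast sum_rho_mul_modEq_zero huv)
  rw [← mul_assoc, show (2 : ℤ) * 2 = 4 by norm_num, mul_zero] at hcross
  rw [← Int.modEq_zero_iff_dvd] at hu hv ⊢
  simpa using (wtE_add_modEq u v).trans ((hu.add hv).add hcross)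

theorem dvd_wtE_smul {u : ι → ZMod (2 * k)} (hu : 4 * (k : ℤ) ∣ wtE u) (c : ZMod (2 * k)) :
    4 * (k : ℤ) ∣ wtE (c • u) := by
  rw [← Int.modEq_zero_iff_dvd] at hu ⊢
  simpa using (wtE_smul_modEq c u).trans (hu.mul_left _)

end Weight

section TypeII

variable {ι : Type} [Fintype ι] {k : ℕ} [NeZero (2 * k)]

theorem dvd_wtE_of_mem_span {S : Set (ι → ZMod (2 * k))}
    (hS : ∀ u ∈ S, ∀ v ∈ S, u ⬝ᵥ v = 0) (hw : ∀ u ∈ S, 4 * (k : ℤ) ∣ wtE u)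
    {v : ι → ZMod (2 * k)} (hv : v ∈ Submodule.span (ZMod (2 * k)) S) :
    4 * (k : ℤ) ∣ wtE v := by
  induction hv using Submodule.span_induction with
  | mem u hu => exact hw u hu
  | zero => simp [wtE_zero]
  | add u v hu hv ihu ihv => exact dvd_wtE_add ihu ihv (dotProduct_eq_zero_of_mem_span hS hu hv)
  | smul c u _ ihu => exact dvd_wtE_smul ihu c

theorem dvd_wtE_add_smul_add_smul {u v w : ι → ZMod (2 * k)} (hu : 4 * (k : ℤ) ∣ wtE u)
    (hv : 4 * (k : ℤ) ∣ wtE v) (hw : 4 * (k : ℤ) ∣ wtE w) (hvw : v ⬝ᵥ w = 0)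
    {a b : ZMod (2 * k)} (h : a * (u ⬝ᵥ v) + b * (u ⬝ᵥ w) = 0) :
    4 * (k : ℤ) ∣ wtE (u + a • v + b • w) := by
  rw [add_assoc]
  refine dvd_wtE_add hu (dvd_wtE_add (dvd_wtE_smul hv a) (dvd_wtE_smul hw b) ?_) ?_
  · simp [smul_dotProduct, dotProduct_smul, hvw]
  · simpa [dotProduct_add, dotProduct_smul] using h

variable [DecidableEq ι]

theorem isTypeII_genCode {M : ι → ι → ZMod (2 * k)} (hsd : IsSelfDual (genCode (2 * k) M))
    (hw : ∀ i, 4 * (k : ℤ) ∣ wtE (genRow M i)) : IsTypeII k (genCode (2 * k) M) := by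
  refine ⟨hsd, fun c hc => ?_⟩
  rw [genCode_eq_span_range_genRow] at hsd hc
  refine dvd_wtE_of_mem_span ?_ (Set.forall_mem_range.2 hw) hc
  exact fun u hu v hv => (hsd u).1 (Submodule.subset_span hu) v (Submodule.subset_span hv)

end TypeII

section Eichler

variable {R ι : Type*} [CommRing R] [Fintype ι]

def eichler (x y r : ι → R) : ι → R :=
  r + (r ⬝ᵥ y) • x - (r ⬝ᵥ x) • y

theorem eichler_dotProduct_eichler {x y : ι → R} (hxx : x ⬝ᵥ x = 0) (hyy : y ⬝ᵥ y = 0)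
    (hxy : x ⬝ᵥ y = 0) (r s : ι → R) : eichler x y r ⬝ᵥ eichler x y s = r ⬝ᵥ s := by
  simp only [eichler, add_dotProduct, sub_dotProduct, dotProduct_add, dotProduct_sub,
    smul_dotProduct, dotProduct_smul, smul_eq_mul, dotProduct_comm y x,
    dotProduct_comm s, hxx, hyy, hxy]
  ring

end Eichler

theorem genRow_eichler {m : ℕ} {ι : Type} [Fintype ι] [DecidableEq ι] (A : ι → ι → ZMod m)
    (x y : ι → ZMod m) (i : ι) :
    genRow (fun i => eichler x y (A i)) i =
      genRow A i + (A i ⬝ᵥ y) • Sum.elim (0 : ι → ZMod m) x +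
        (-(A i ⬝ᵥ x)) • Sum.elim (0 : ι → ZMod m) y := by
  ext (j | j) <;> simp [genRow, eichler, sub_eq_add_neg]

/-- transforming the right half of a generator matrix of a Type II
`ZMod (2k)`-code by `r ↦ r + ⟨r,y⟩x − ⟨r,x⟩y`, with `wt_E(x) ≡ wt_E(y) ≡ 0 (mod 4k)`
and `⟨x,y⟩ = 0`, gives a Type II `ZMod (2k)`-code. -/
theorem stmt2 (k n : ℕ) (hk : 1 ≤ k) (A : Fin n → Fin n → ZMod (2 * k))
    (hC : IsTypeII k (genCode (2 * k) A))
    (x y : Fin n → ZMod (2 * k))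
    (hx : (4 * (k : ℤ)) ∣ wtE x) (hy : (4 * (k : ℤ)) ∣ wtE y)
    (hxy : dotP x y = 0) :
    IsTypeII k (genCode (2 * k)
      (fun i j => A i j + dotP (A i) y * x j - dotP (A i) x * y j)) := by
  have : NeZero (2 * k) := ⟨by omega⟩
  obtain ⟨hsd, hwt⟩ := hC
  rw [dotP_eq_dotProduct] at hxy
  have hxx := dotProduct_self_eq_zero_of_dvd_wtE hx
  have hyy := dotProduct_self_eq_zero_of_dvd_wtE hy
  change IsTypeII k (genCode (2 * k) fun i => eichler x y (A i))
  have hsd' : IsSelfDual (genCode (2 * k) fun i => eichler x y (A i)) := by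
    rw [isSelfDual_genCode_iff] at hsd ⊢
    rw [← hsd]
    ext i j
    exact eichler_dotProduct_eichler hxx hyy hxy (A i) (A j)
  refine isTypeII_genCode hsd' fun i => ?_
  rw [genRow_eichler]
  refine dvd_wtE_add_smul_add_smul (hwt _ (genRow_mem_genCode A i))
    (by simpa [wtE_sumElim, wtE_zero]) (by simpa [wtE_sumElim, wtE_zero])
    (by simpa [sumElim_dotProduct_sumElim]) ?_
  simp only [genRow, sumElim_dotProduct_sumElim, dotProduct_zero, zero_add]
  ring
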